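/- Let τ_i, τ_j be real n×n matrices with τ_i² = -2τ_i, τ_j² = -2τ_j, τ_i τ_j τ_i = α τ_i and τ_j τ_i τ_j = α τ_j, where α ∈ {1, -1}. Then for every positive integer r, [(1+τ_i)(1+τ_j)]^r - [(1+τ_j)(1+τ_i)]^r = α^{r-1} · E_{2r-1}(1, α) · (τ_i τ_j - τ_j τ_i), where E_n denotes the Dickson polynomial of the second kind. -/

import Mathlib

/-!
Write `P = (1 + a)(1 + b)` and `Q = (1 + b)(1 + a)`. The relations make `1, a, b, ab, ba` span a
subalgebra closed under multiplication, and an induction shows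
`P^(m+1) = 1 + (c (m+1) + c m) (a + b) + c (m+1) ab + c m ba` for the sequence `c 0 = 0`, `c 1 = 1`,
`c (m+2) = 1 + (α - 2) c (m+1) - c m`. Since `Q^(m+1)` is the same expression with `a` and `b`
swapped, `P^(m+1) - Q^(m+1) = (c (m+1) - c m)(ab - ba)`. The differences `c (m+1) - c m` satisfy
`d (m+2) = (α - 2) d (m+1) - d m`, and so does `α^m E_{2m+1}(1, α)` when `α² = 1`, by the
two-step recurrence `E_{n+4} = (x² - 2a) E_{n+2} - a² E_n` of Dickson polynomials.
-/

/-- Dickson polynomials of the second kind: `E 0 = 1`, `E 1 = x`,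
`E (n+2) = x * E (n+1) - a * E n`. -/
noncomputable def dicksonE (x a : ℝ) : ℕ → ℝ
  | 0 => 1
  | 1 => x
  | n + 2 => x * dicksonE x a (n + 1) - a * dicksonE x a n

lemma dicksonE_add_two (x a : ℝ) (n : ℕ) :
    dicksonE x a (n + 2) = x * dicksonE x a (n + 1) - a * dicksonE x a n := rfl

lemma dicksonE_add_four (x a : ℝ) (n : ℕ) :
    dicksonE x a (n + 4) = (x ^ 2 - 2 * a) * dicksonE x a (n + 2) - a ^ 2 * dicksonE x a n := by
  have h₂ := dicksonE_add_two x a n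
  have h₃ := dicksonE_add_two x a (n + 1)
  have h₄ := dicksonE_add_two x a (n + 2)
  linear_combination h₄ + x * h₃ + a * h₂

section MixedProduct

variable {K A : Type*} [CommRing K] [Ring A] [Algebra K A]

def mixedProductCoeff (α : K) : ℕ → K
  | 0 => 0
  | 1 => 1
  | m + 2 => 1 + (α - 2) * mixedProductCoeff α (m + 1) - mixedProductCoeff α m

lemma mixedProductCoeff_add_two (α : K) (m : ℕ) :
    mixedProductCoeff α (m + 2)
      = 1 + (α - 2) * mixedProductCoeff α (m + 1) - mixedProductCoeff α m :=
  rfl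

lemma one_add_mul_one_add_pow_succ {a b : A} {α : K}
    (ha : a * a = -2 * a) (hb : b * b = -2 * b)
    (haba : a * b * a = α • a) (hbab : b * a * b = α • b) (m : ℕ) :
    ((1 + a) * (1 + b)) ^ (m + 1)
      = 1 + (mixedProductCoeff α (m + 1) + mixedProductCoeff α m) • (a + b)
          + mixedProductCoeff α (m + 1) • (a * b) + mixedProductCoeff α m • (b * a) := by
  have haa : a * a = (-2 : K) • a := by rw [ha, neg_smul, two_smul, neg_mul, two_mul]
  have hbb : b * b = (-2 : K) • b := by rw [hb, neg_smul, two_smul, neg_mul, two_mul]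
  have haab : a * (a * b) = (-2 : K) • (a * b) := by rw [← mul_assoc, haa, smul_mul_assoc]
  have haba' : a * (b * a) = α • a := by rw [← mul_assoc, haba]
  have hbab' : b * (a * b) = α • b := by rw [← mul_assoc, hbab]
  induction m with
  | zero =>
    simp only [zero_add, pow_one, mixedProductCoeff, add_zero, one_smul, zero_smul]
    noncomm_ring
  | succ m ih =>
    rw [pow_succ, ih, mixedProductCoeff_add_two]
    simp only [mul_add, add_mul, one_mul, mul_one, smul_mul_assoc, mul_smul_comm, smul_add,
      mul_assoc, haa, hbb, haab, haba', hbab']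
    module

lemma one_add_mul_one_add_pow_sub_pow {a b : A} {α : K}
    (ha : a * a = -2 * a) (hb : b * b = -2 * b)
    (haba : a * b * a = α • a) (hbab : b * a * b = α • b) (m : ℕ) :
    ((1 + a) * (1 + b)) ^ (m + 1) - ((1 + b) * (1 + a)) ^ (m + 1)
      = (mixedProductCoeff α (m + 1) - mixedProductCoeff α m) • (a * b - b * a) := by
  rw [one_add_mul_one_add_pow_succ ha hb haba hbab, one_add_mul_one_add_pow_succ hb ha hbab haba]
  module

end MixedProduct

lemma mixedProductCoeff_succ_sub {α : ℝ} (hα : α ^ 2 = 1) (m : ℕ) :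
    mixedProductCoeff α (m + 1) - mixedProductCoeff α m = α ^ m * dicksonE 1 α (2 * m + 1) := by
  induction m using Nat.twoStepInduction with
  | zero => simp [mixedProductCoeff, dicksonE]
  | one =>
    simp only [mixedProductCoeff, dicksonE]
    linear_combination 2 * hα
  | more m ih₀ ih₁ =>
    rw [show 2 * (m + 1) + 1 = 2 * m + 1 + 2 by ring] at ih₁
    rw [show 2 * (m + 2) + 1 = 2 * m + 1 + 4 by ring, dicksonE_add_four]
    linear_combination mixedProductCoeff_add_two α (m + 1) - mixedProductCoeff_add_two α m
      + (α - 2) * ih₁ - ih₀ + (2 * α ^ (m + 1) * dicksonE 1 α (2 * m + 1 + 2)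
        + α ^ m * (α ^ 2 + 1) * dicksonE 1 α (2 * m + 1)) * hα

theorem stmt_3 {n : ℕ} (τi τj : Matrix (Fin n) (Fin n) ℝ) (α : ℝ)
    (hα : α = 1 ∨ α = -1)
    (hi : τi * τi = -2 * τi) (hj : τj * τj = -2 * τj)
    (hiji : τi * τj * τi = α • τi) (hjij : τj * τi * τj = α • τj) :
    ∀ r : ℕ, 0 < r →
      ((1 + τi) * (1 + τj)) ^ r - ((1 + τj) * (1 + τi)) ^ r
        = (α ^ (r - 1) * dicksonE 1 α (2 * r - 1)) • (τi * τj - τj * τi) := by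
  intro r hr
  obtain ⟨m, rfl⟩ := Nat.exists_eq_add_of_lt hr
  have hα2 : α ^ 2 = 1 := by rcases hα with rfl | rfl <;> norm_num
  rw [zero_add, one_add_mul_one_add_pow_sub_pow hi hj hiji hjij, mixedProductCoeff_succ_sub hα2,
    Nat.add_sub_cancel, show 2 * (m + 1) - 1 = 2 * m + 1 by omega]
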